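/- Let C be a finite set of candidates, PW = {pw_1,…,pw_l} ⊆ C a nonempty set of possible winners, and P a preference order on C with P(pw_a,pw_b) if and only if a < b. Let P' be a preference order on C such that P'(pw_a,pw_{a+1}) holds for all a ∈ {1,…,l−1} and |[pw_a, P', pw_{a+1}]| = |[pw_a, P, pw_{a+1}]| for all a ∈ {1,…,l−1}. Then for every possible world s for PW, the outcomes coincide: F(s,P') = F(s,P); in particular, P' does not locally dominate P (given PW). -/

import Mathlib

/-- A preference order: a strict total order on candidates. -/
def IsPref {C : Type*} (P : C → C → Prop) : Prop :=
  (∀ a b : C, a ≠ b → P a b ∨ P b a) ∧ (∀ a : C, ¬ P a a) ∧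
    ∀ a b c : C, P a b → P b c → P a c

/-- The Borda score that preference order `P` gives candidate `c`. -/
noncomputable def borda {C : Type*} [Fintype C] (P : C → C → Prop) (c : C) : ℕ :=
  1 + Set.ncard {c' : C | P c c'}

/-- `c` is the outcome `F(s, P)`: it beats every other candidate either in total score
`s + borda`, or on equal total score by the tie-breaking order `tb`. -/
def IsWinner {C : Type*} [Fintype C] (tb : C → C → Prop) (s : C → ℕ)
    (P : C → C → Prop) (c : C) : Prop :=
  ∀ c' : C, c' ≠ c →
    s c' + borda P c' < s c + borda P c ∨
      (s c' + borda P c' = s c + borda P c ∧ tb c c')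

/-- `s` is a possible world for the set `PW` of possible winners. -/
def PossibleWorld {C : Type*} [Fintype C] (tb : C → C → Prop) (PW : Set C)
    (s : C → ℕ) : Prop :=
  ∀ R : C → C → Prop, IsPref R → ∀ c : C, IsWinner tb s R c → c ∈ PW

/-- `P'` locally dominates `P` given the possible-winner set `PW`. -/
def LocDom {C : Type*} [Fintype C] (tb : C → C → Prop) (PW : Set C)
    (P' P : C → C → Prop) : Prop :=
  (∀ s : C → ℕ, PossibleWorld tb PW s →
      ∀ w' w : C, IsWinner tb s P' w' → IsWinner tb s P w → w' = w ∨ P w' w) ∧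
  ∃ s : C → ℕ, PossibleWorld tb PW s ∧
      ∃ w' w : C, IsWinner tb s P' w' ∧ IsWinner tb s P w ∧ P w' w

/-- The (closed) segment `[c, P, c']` of candidates between `c` and `c'`. -/
def seg {C : Type*} (P : C → C → Prop) (c c' : C) : Set C :=
  {d : C | (d = c ∨ P c d) ∧ (d = c' ∨ P d c')}

/-!
Equal segment sizes between consecutive possible winners force `borda P' - borda P` to be
constant on the possible winners. In a possible world the outcome under any order is a possible
winner, so shifting the scores of all of them by the same amount cannot change which one wins.
-/

section Lemmas

variable {C : Type*}

theorem IsPref.exists_forall_ne [Finite C] [Nonempty C] {P : C → C → Prop} (hP : IsPref P) :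
    ∃ w, ∀ c, c ≠ w → P w c := by
  have : IsTrans C P := ⟨hP.2.2⟩
  have : Std.Irrefl P := ⟨hP.2.1⟩
  obtain ⟨w, -, hw⟩ :=
    (Finite.wellFounded_of_trans_of_irrefl P).has_min Set.univ Set.univ_nonempty
  exact ⟨w, fun c hc => (hP.1 w c hc.symm).resolve_right (hw c trivial)⟩

section Borda

variable [Fintype C] {P : C → C → Prop}

theorem borda_add_ncard_seg (hP : IsPref P) {c c' : C} (h : P c c') :
    borda P c' + (seg P c c').ncard = borda P c + 1 := by
  obtain ⟨htot, hirr, htrans⟩ := hP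
  set A := {d : C | P c d ∧ (d = c' ∨ P d c')}
  have hseg : seg P c c' = insert c A := by
    ext d
    simp only [seg, A, Set.mem_ofPred_eq, Set.mem_insert_iff]
    constructor
    · rintro ⟨rfl | hcd, hdc'⟩
      exacts [Or.inl rfl, Or.inr ⟨hcd, hdc'⟩]
    · rintro (rfl | ⟨hcd, hdc'⟩)
      exacts [⟨Or.inl rfl, Or.inr h⟩, ⟨Or.inr hcd, hdc'⟩]
  have hsplit : {d : C | P c d} = A ∪ {d | P c' d} := by
    ext d
    simp only [A, Set.mem_ofPred_eq, Set.mem_union]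
    constructor
    · intro hcd
      by_cases hdc' : d = c'
      · exact Or.inl ⟨hcd, Or.inl hdc'⟩
      · exact (htot d c' hdc').imp (fun hd => ⟨hcd, Or.inr hd⟩) id
    · rintro (⟨hcd, -⟩ | hc'd)
      exacts [hcd, htrans c c' d h hc'd]
  have hdisj : Disjoint A {d | P c' d} := by
    rw [Set.disjoint_left]
    rintro d ⟨-, rfl | hdc'⟩ hc'd
    exacts [hirr d hc'd, hirr d (htrans d c' d hdc' hc'd)]
  have hseg_card : (seg P c c').ncard = A.ncard + 1 := by
    rw [hseg, Set.ncard_insert_of_notMem (fun hc => hirr c hc.1) A.toFinite]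
  have hsplit_card : {d : C | P c d}.ncard = A.ncard + {d | P c' d}.ncard := by
    rw [hsplit, Set.ncard_union_eq hdisj A.toFinite (Set.toFinite _)]
  simp only [borda]
  omega

theorem borda_add_borda_eq_of_ncard_seg_eq {P' : C → C → Prop} (hP : IsPref P)
    (hP' : IsPref P') {c c' : C} (h : P c c') (h' : P' c c')
    (hseg : (seg P' c c').ncard = (seg P c c').ncard) :
    borda P' c + borda P c' = borda P c + borda P' c' := by
  have := borda_add_ncard_seg hP h
  have := borda_add_ncard_seg hP' h'
  omega

end Borda

theorem Fin.add_eq_add_of_succ {l : ℕ} (u v : Fin l → ℕ)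
    (h : ∀ a : ℕ, ∀ h : a + 1 < l,
      u ⟨a, Nat.lt_of_succ_lt h⟩ + v ⟨a + 1, h⟩ = v ⟨a, Nat.lt_of_succ_lt h⟩ + u ⟨a + 1, h⟩)
    (a b : Fin l) : u a + v b = v a + u b := by
  have from_zero : ∀ (b : ℕ) (hb : b < l),
      u ⟨0, by omega⟩ + v ⟨b, hb⟩ = v ⟨0, by omega⟩ + u ⟨b, hb⟩ := by
    intro b
    induction b with
    | zero => exact fun _ => Nat.add_comm _ _
    | succ b ih =>
      intro hb
      have := ih (by omega)
      have := h b hb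
      omega
  have ha := from_zero a a.2
  have hb := from_zero b b.2
  simp only [Fin.eta] at ha hb
  omega

section Winner

variable [Fintype C] {tb : C → C → Prop} {s : C → ℕ}

theorem exists_isWinner [Nonempty C] (htb : IsPref tb) (s : C → ℕ) (P : C → C → Prop) :
    ∃ c, IsWinner tb s P c := by
  let score c := s c + borda P c
  have hbeats : IsPref fun x y => score y < score x ∨ (score y = score x ∧ tb x y) := by
    obtain ⟨htot, hirr, htrans⟩ := htb
    refine ⟨fun x y hxy => ?_, fun x => ?_, fun x y z => ?_⟩
    · rcases lt_trichotomy (score x) (score y) with hlt | heq | hgt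
      · exact Or.inr (Or.inl hlt)
      · exact (htot x y hxy).imp (fun ht => Or.inr ⟨heq.symm, ht⟩) fun ht => Or.inr ⟨heq, ht⟩
      · exact Or.inl (Or.inl hgt)
    · rintro (hlt | ⟨-, ht⟩)
      exacts [lt_irrefl _ hlt, hirr x ht]
    · rintro (h1 | ⟨h1, t1⟩) (h2 | ⟨h2, t2⟩)
      · exact Or.inl (by omega)
      · exact Or.inl (by omega)
      · exact Or.inl (by omega)
      · exact Or.inr ⟨by omega, htrans x y z t1 t2⟩
  exact hbeats.exists_forall_ne

theorem IsWinner.eq_of_borda_add_eq (htb : IsPref tb) {P P' : C → C → Prop} {c w : C}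
    (hc : IsWinner tb s P' c) (hw : IsWinner tb s P w)
    (hcross : borda P' c + borda P w = borda P c + borda P' w) : c = w := by
  by_contra hne
  rcases hc w (Ne.symm hne) with h1 | ⟨h1, t1⟩ <;> rcases hw c hne with h2 | ⟨h2, t2⟩
  · omega
  · omega
  · omega
  · exact htb.2.1 c (htb.2.2 c w c t1 t2)

theorem IsWinner.unique (htb : IsPref tb) {P : C → C → Prop} {c w : C}
    (hc : IsWinner tb s P c) (hw : IsWinner tb s P w) : c = w :=
  hc.eq_of_borda_add_eq htb hw rfl

theorem isWinner_iff_of_borda_add_eq (htb : IsPref tb) {PW : Set C} (hs : PossibleWorld tb PW s)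
    {P P' : C → C → Prop} (hP : IsPref P) (hP' : IsPref P')
    (hcross : ∀ a ∈ PW, ∀ b ∈ PW, borda P' a + borda P b = borda P a + borda P' b) (c : C) :
    IsWinner tb s P' c ↔ IsWinner tb s P c := by
  have : Nonempty C := ⟨c⟩
  constructor
  · intro hc
    obtain ⟨w, hw⟩ := exists_isWinner htb s P
    rwa [hc.eq_of_borda_add_eq htb hw (hcross c (hs P' hP' c hc) w (hs P hP w hw))]
  · intro hc
    obtain ⟨w, hw⟩ := exists_isWinner htb s P'
    have hcross' := hcross w (hs P' hP' w hw) c (hs P hP c hc)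
    rwa [hc.eq_of_borda_add_eq htb hw (by omega)]

end Winner

end Lemmas

theorem statement3 {C : Type*} [Fintype C]
    (tb : C → C → Prop) (htb : IsPref tb)
    (l : ℕ) (pw : Fin l → C)
    (P P' : C → C → Prop) (hP : IsPref P) (hP' : IsPref P')
    (horder : ∀ a b : Fin l, P (pw a) (pw b) ↔ a < b)
    (horder' : ∀ a : ℕ, ∀ h : a + 1 < l, P' (pw ⟨a, by omega⟩) (pw ⟨a + 1, h⟩))
    (hsize : ∀ a : ℕ, ∀ h : a + 1 < l,
      (seg P' (pw ⟨a, by omega⟩) (pw ⟨a + 1, h⟩)).ncard =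
        (seg P (pw ⟨a, by omega⟩) (pw ⟨a + 1, h⟩)).ncard) :
    (∀ s : C → ℕ, PossibleWorld tb (Set.range pw) s →
        ∀ c : C, IsWinner tb s P' c ↔ IsWinner tb s P c) ∧
      ¬ LocDom tb (Set.range pw) P' P := by
  have hcross : ∀ a b : Fin l,
      borda P' (pw a) + borda P (pw b) = borda P (pw a) + borda P' (pw b) :=
    Fin.add_eq_add_of_succ (borda P' ∘ pw) (borda P ∘ pw) fun a ha =>
      borda_add_borda_eq_of_ncard_seg_eq hP hP'
        ((horder _ _).2 (Fin.mk_lt_mk.2 a.lt_succ_self)) (horder' a ha) (hsize a ha)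
  have hiff : ∀ s : C → ℕ, PossibleWorld tb (Set.range pw) s →
      ∀ c : C, IsWinner tb s P' c ↔ IsWinner tb s P c := by
    intro s hs
    refine isWinner_iff_of_borda_add_eq htb hs hP hP' ?_
    rintro _ ⟨a, rfl⟩ _ ⟨b, rfl⟩
    exact hcross a b
  refine ⟨hiff, ?_⟩
  rintro ⟨-, s, hs, w', w, hw', hw, hPw'w⟩
  obtain rfl := ((hiff s hs w').1 hw').unique htb hw
  exact hP.2.1 w' hPw'w
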